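/- Under the Slater-type assumption at x̄, if 𝒲* ∈ ((𝕎×𝕍)^N)^n maximizes 𝒲 ↦ G(𝒲; x̄) over ((𝕎×𝕍)^N)^n, then G(𝒲*; x̄) = J*_N(x̄), where J*_N(x̄) := inf{r : r ≥ 0 and (θ,η,r) satisfies the constraints for every W ∈ (𝕎×𝕍)^N at x̄} is the value of the semi-infinite program. -/

import Mathlib

open Matrix

/-- Extend a `Fin N`-indexed disturbance sequence to `ℕ` (by zero outside the horizon). -/
def padW (d m N : ℕ) (W : Fin N → (Fin d → ℝ) × (Fin m → ℝ)) :
    ℕ → (Fin d → ℝ) × (Fin m → ℝ) :=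
  fun t => if h : t < N then W ⟨t, h⟩ else 0

/-- Extend the disturbance-feedback gains `θ = (θ_{t,i})` to `ℕ × ℕ` (by zero). -/
def padTheta (d m N : ℕ) (θ : Fin N → Fin N → Matrix (Fin m) (Fin d) ℝ) :
    ℕ → ℕ → Matrix (Fin m) (Fin d) ℝ :=
  fun t i => if h : t < N ∧ i < N then θ ⟨t, h.1⟩ ⟨i, h.2⟩ else 0

/-- Extend the affine terms `η = (η_t)` to `ℕ` (by zero). -/
def padEta (m N : ℕ) (η : Fin N → Fin m → ℝ) : ℕ → Fin m → ℝ :=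
  fun t => if h : t < N then η ⟨t, h⟩ else 0

/-- The control `u_t = ∑_{i<t} θ_{t,i} (w_i + B v_i) + η_t` generated by the
disturbance-feedback parameterization `p = (θ, η)`. -/
noncomputable def ctrl (d m N : ℕ) (B : Matrix (Fin d) (Fin m) ℝ)
    (W : Fin N → (Fin d → ℝ) × (Fin m → ℝ))
    (p : (Fin N → Fin N → Matrix (Fin m) (Fin d) ℝ) × (Fin N → Fin m → ℝ))
    (t : ℕ) : Fin m → ℝ :=
  (∑ i ∈ Finset.range t,
      padTheta d m N p.1 t i *ᵥ ((padW d m N W i).1 + B *ᵥ (padW d m N W i).2))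
    + padEta m N p.2 t

/-- The state sequence `x_0 = x̄`, `x_{t+1} = A x_t + B u_t + B v_t + w_t` generated by the
disturbance-feedback parameterization `p = (θ, η)`. -/
noncomputable def state (d m N : ℕ) (A : Matrix (Fin d) (Fin d) ℝ)
    (B : Matrix (Fin d) (Fin m) ℝ) (xbar : Fin d → ℝ)
    (W : Fin N → (Fin d → ℝ) × (Fin m → ℝ))
    (p : (Fin N → Fin N → Matrix (Fin m) (Fin d) ℝ) × (Fin N → Fin m → ℝ)) :
    ℕ → Fin d → ℝ
  | 0 => xbar
  | t + 1 => A *ᵥ state d m N A B xbar W p t + B *ᵥ ctrl d m N B W p t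
      + B *ᵥ (padW d m N W t).2 + (padW d m N W t).1

/-- The cost `J_N(x̄, θ, η, W) = ∑_{t<N} c (x_t, u_t) + c_F (x_N)`. -/
noncomputable def costJ (d m N : ℕ) (A : Matrix (Fin d) (Fin d) ℝ)
    (B : Matrix (Fin d) (Fin m) ℝ)
    (c : (Fin d → ℝ) → (Fin m → ℝ) → ℝ) (cF : (Fin d → ℝ) → ℝ)
    (xbar : Fin d → ℝ) (W : Fin N → (Fin d → ℝ) × (Fin m → ℝ))
    (p : (Fin N → Fin N → Matrix (Fin m) (Fin d) ℝ) × (Fin N → Fin m → ℝ)) : ℝ :=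
  (∑ t ∈ Finset.range N, c (state d m N A B xbar W p t) (ctrl d m N B W p t))
    + cF (state d m N A B xbar W p N)

/-- `(θ, η, r)` satisfies the constraints for the disturbance sequence `W` at `x̄`:
`J_N(x̄,θ,η,W) − r ≤ 0`, `x_t ∈ 𝕄` and `u_t + v_t ∈ 𝕌` for `t = 0,…,N−1`, and `x_N ∈ X_f`. -/
def SatisfiesCon (d m N : ℕ) (A : Matrix (Fin d) (Fin d) ℝ) (B : Matrix (Fin d) (Fin m) ℝ)
    (c : (Fin d → ℝ) → (Fin m → ℝ) → ℝ) (cF : (Fin d → ℝ) → ℝ)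
    (M : Set (Fin d → ℝ)) (U : Set (Fin m → ℝ)) (Xf : Set (Fin d → ℝ))
    (xbar : Fin d → ℝ)
    (p : (Fin N → Fin N → Matrix (Fin m) (Fin d) ℝ) × (Fin N → Fin m → ℝ)) (r : ℝ)
    (W : Fin N → (Fin d → ℝ) × (Fin m → ℝ)) : Prop :=
  costJ d m N A B c cF xbar W p - r ≤ 0 ∧
    (∀ t < N, state d m N A B xbar W p t ∈ M) ∧
    (∀ t < N, ctrl d m N B W p t + (padW d m N W t).2 ∈ U) ∧
    state d m N A B xbar W p N ∈ Xf

/-- The admissible disturbance sequences `(𝕎 × 𝕍)^N`. -/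
def Adm (d m N : ℕ) (Wset : Set (Fin d → ℝ)) (Vset : Set (Fin m → ℝ)) :
    Set (Fin N → (Fin d → ℝ) × (Fin m → ℝ)) :=
  {W | ∀ t, (W t).1 ∈ Wset ∧ (W t).2 ∈ Vset}

/-- Number of decision variables: `n = m d N² + m N + 1`. -/
def nDim (d m N : ℕ) : ℕ := m * d * N ^ 2 + m * N + 1

/-- The relaxed value `G(𝒲; x̄)`: the infimum of the slack `r ≥ 0` over decision variables
`(θ, η, r)` satisfying the constraints for each of the `n` disturbance sequences in `𝒲`. -/
noncomputable def Gval (d m N : ℕ) (A : Matrix (Fin d) (Fin d) ℝ)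
    (B : Matrix (Fin d) (Fin m) ℝ)
    (c : (Fin d → ℝ) → (Fin m → ℝ) → ℝ) (cF : (Fin d → ℝ) → ℝ)
    (Mset : Set (Fin d → ℝ)) (Uset : Set (Fin m → ℝ)) (Xf : Set (Fin d → ℝ))
    (xbar : Fin d → ℝ)
    (Ws : Fin (nDim d m N) → Fin N → (Fin d → ℝ) × (Fin m → ℝ)) : ℝ :=
  sInf {r : ℝ | 0 ≤ r ∧ ∃ p : (Fin N → Fin N → Matrix (Fin m) (Fin d) ℝ) × (Fin N → Fin m → ℝ),
    ∀ i, SatisfiesCon d m N A B c cF Mset Uset Xf xbar p r (Ws i)}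

/-- The Slater-type assumption at `x̄`: there are a nonempty open set
`O ⊆ int 𝕄 × int 𝕌` and `(θ, η, r)` such that for every admissible disturbance sequence
`W` one has `J_N(x̄,θ,η,W) − r < 0`, `(x_t, u_t + v_t) ∈ O` for `t = 0,…,N−1`, and
`x_N ∈ int X_f`. -/
def SlaterCondition (d m N : ℕ) (A : Matrix (Fin d) (Fin d) ℝ)
    (B : Matrix (Fin d) (Fin m) ℝ)
    (c : (Fin d → ℝ) → (Fin m → ℝ) → ℝ) (cF : (Fin d → ℝ) → ℝ)
    (Mset : Set (Fin d → ℝ)) (Uset : Set (Fin m → ℝ)) (Xf : Set (Fin d → ℝ))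
    (Wset : Set (Fin d → ℝ)) (Vset : Set (Fin m → ℝ)) (xbar : Fin d → ℝ) : Prop :=
  ∃ O : Set ((Fin d → ℝ) × (Fin m → ℝ)), IsOpen O ∧ O.Nonempty ∧
    O ⊆ (interior Mset) ×ˢ (interior Uset) ∧
    ∃ (p : (Fin N → Fin N → Matrix (Fin m) (Fin d) ℝ) × (Fin N → Fin m → ℝ)) (r : ℝ),
      ∀ W ∈ Adm d m N Wset Vset,
        costJ d m N A B c cF xbar W p - r < 0 ∧
        (∀ t < N, (state d m N A B xbar W p t,
          ctrl d m N B W p t + (padW d m N W t).2) ∈ O) ∧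
        state d m N A B xbar W p N ∈ interior Xf

section AuxLemmas

variable {d m N : ℕ} {A : Matrix (Fin d) (Fin d) ℝ} {B : Matrix (Fin d) (Fin m) ℝ}

abbrev Pspace (d m N : ℕ) := (Fin N → Fin N → Matrix (Fin m) (Fin d) ℝ) × (Fin N → Fin m → ℝ)

lemma padTheta_comb (a b : ℝ) (p q : Pspace d m N) (t i : ℕ) :
    padTheta d m N (a • p + b • q).1 t i
      = a • padTheta d m N p.1 t i + b • padTheta d m N q.1 t i := by
  unfold padTheta
  split
  · simp [Prod.fst_add, Prod.smul_fst]
  · simp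

lemma padEta_comb (a b : ℝ) (p q : Pspace d m N) (t : ℕ) :
    padEta m N (a • p + b • q).2 t = a • padEta m N p.2 t + b • padEta m N q.2 t := by
  unfold padEta
  split
  · simp [Prod.snd_add, Prod.smul_snd]
  · simp

lemma ctrl_comb (a b : ℝ) (W : Fin N → (Fin d → ℝ) × (Fin m → ℝ)) (p q : Pspace d m N) (t : ℕ) :
    ctrl d m N B W (a • p + b • q) t
      = a • ctrl d m N B W p t + b • ctrl d m N B W q t := by
  unfold ctrl
  simp only [padTheta_comb a b p q, padEta_comb a b p q, Matrix.add_mulVec,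
    Matrix.smul_mulVec, Finset.sum_add_distrib, ← Finset.smul_sum, smul_add]
  abel

lemma ctrl_add (W : Fin N → (Fin d → ℝ) × (Fin m → ℝ)) (p q : Pspace d m N) (t : ℕ) :
    ctrl d m N B W (p + q) t = ctrl d m N B W p t + ctrl d m N B W q t := by
  have := ctrl_comb (B := B) 1 1 W p q t
  simpa using this

lemma state_comb {a b : ℝ} (hab : a + b = 1) (xbar : Fin d → ℝ)
    (W : Fin N → (Fin d → ℝ) × (Fin m → ℝ)) (p q : Pspace d m N) (t : ℕ) :
    state d m N A B xbar W (a • p + b • q) t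
      = a • state d m N A B xbar W p t + b • state d m N A B xbar W q t := by
  induction t with
  | zero =>
      show xbar = a • xbar + b • xbar
      rw [← add_smul, hab, one_smul]
  | succ t ih =>
      show A *ᵥ state d m N A B xbar W (a • p + b • q) t
          + B *ᵥ ctrl d m N B W (a • p + b • q) t
          + B *ᵥ (padW d m N W t).2 + (padW d m N W t).1 = _
      rw [ih, ctrl_comb]
      show _ = a • (A *ᵥ state d m N A B xbar W p t + B *ᵥ ctrl d m N B W p t
          + B *ᵥ (padW d m N W t).2 + (padW d m N W t).1)
          + b • (A *ᵥ state d m N A B xbar W q t + B *ᵥ ctrl d m N B W q t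
          + B *ᵥ (padW d m N W t).2 + (padW d m N W t).1)
      have hc : ∀ v : Fin d → ℝ, v = a • v + b • v := fun v => by
        rw [← add_smul, hab, one_smul]
      rw [Matrix.mulVec_add, Matrix.mulVec_smul, Matrix.mulVec_smul,
        Matrix.mulVec_add, Matrix.mulVec_smul, Matrix.mulVec_smul]
      simp only [smul_add]
      conv_lhs => rw [hc (B *ᵥ (padW d m N W t).2), hc (padW d m N W t).1]
      abel

end AuxLemmas
section AuxLemmas2

variable {d m N : ℕ} {A : Matrix (Fin d) (Fin d) ℝ} {B : Matrix (Fin d) (Fin m) ℝ}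

lemma ctrl_smul (a : ℝ) (W : Fin N → (Fin d → ℝ) × (Fin m → ℝ)) (p : Pspace d m N) (t : ℕ) :
    ctrl d m N B W (a • p) t = a • ctrl d m N B W p t := by
  have := ctrl_comb (B := B) a 0 W p p t
  simpa using this

/-- `p ↦ (ctrl p t)_{t<N}` as a linear map. -/
noncomputable def ctrlL (d m N : ℕ) (B : Matrix (Fin d) (Fin m) ℝ)
    (W : Fin N → (Fin d → ℝ) × (Fin m → ℝ)) :
    Pspace d m N →ₗ[ℝ] (Fin N → Fin m → ℝ) where
  toFun p := fun t => ctrl d m N B W p t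
  map_add' p q := by funext t; exact ctrl_add W p q t
  map_smul' a p := by funext t; exact ctrl_smul a W p t

lemma ctrl_of_ge (W : Fin N → (Fin d → ℝ) × (Fin m → ℝ)) (p : Pspace d m N) {t : ℕ}
    (ht : N ≤ t) : ctrl d m N B W p t = 0 := by
  unfold ctrl padTheta padEta
  rw [dif_neg (by omega)]
  rw [Finset.sum_eq_zero, add_zero]
  intro i _
  rw [dif_neg (by omega)]
  simp

lemma state_congr {xbar : Fin d → ℝ} {W : Fin N → (Fin d → ℝ) × (Fin m → ℝ)}
    {p q : Pspace d m N} (h : ∀ t, ctrl d m N B W p t = ctrl d m N B W q t) :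
    ∀ t, state d m N A B xbar W p t = state d m N A B xbar W q t := by
  intro t
  induction t with
  | zero => rfl
  | succ t ih =>
      show A *ᵥ state d m N A B xbar W p t + B *ᵥ ctrl d m N B W p t + _ + _ = _
      rw [ih, h t]
      rfl

lemma satisfiesCon_congr {c : (Fin d → ℝ) → (Fin m → ℝ) → ℝ} {cF : (Fin d → ℝ) → ℝ}
    {Mset : Set (Fin d → ℝ)} {Uset : Set (Fin m → ℝ)} {Xf : Set (Fin d → ℝ)}
    {xbar : Fin d → ℝ} {W : Fin N → (Fin d → ℝ) × (Fin m → ℝ)} {p q : Pspace d m N} {r : ℝ}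
    (h : ∀ t, ctrl d m N B W p t = ctrl d m N B W q t)
    (hp : SatisfiesCon d m N A B c cF Mset Uset Xf xbar p r W) :
    SatisfiesCon d m N A B c cF Mset Uset Xf xbar q r W := by
  have hs := state_congr (A := A) (xbar := xbar) h
  obtain ⟨h1, h2, h3, h4⟩ := hp
  refine ⟨?_, ?_, ?_, ?_⟩
  · have : costJ d m N A B c cF xbar W q = costJ d m N A B c cF xbar W p := by
      unfold costJ
      rw [hs N]
      congr 1
      exact Finset.sum_congr rfl fun t _ => by rw [hs t, h t]
    rw [this]; exact h1
  · intro t ht; rw [← hs t]; exact h2 t ht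
  · intro t ht; rw [← h t]; exact h3 t ht
  · rw [← hs N]; exact h4

/-- Monotonicity in the slack `r`. -/
lemma satisfiesCon_mono {c : (Fin d → ℝ) → (Fin m → ℝ) → ℝ} {cF : (Fin d → ℝ) → ℝ}
    {Mset : Set (Fin d → ℝ)} {Uset : Set (Fin m → ℝ)} {Xf : Set (Fin d → ℝ)}
    {xbar : Fin d → ℝ} {W : Fin N → (Fin d → ℝ) × (Fin m → ℝ)} {p : Pspace d m N} {r r' : ℝ}
    (hrr : r ≤ r') (hp : SatisfiesCon d m N A B c cF Mset Uset Xf xbar p r W) :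
    SatisfiesCon d m N A B c cF Mset Uset Xf xbar p r' W :=
  ⟨by linarith [hp.1], hp.2.1, hp.2.2.1, hp.2.2.2⟩

end AuxLemmas2
section AuxLemmas3

variable {d m N : ℕ} {A : Matrix (Fin d) (Fin d) ℝ} {B : Matrix (Fin d) (Fin m) ℝ}

lemma continuous_padTheta (t i : ℕ) :
    Continuous fun p : Pspace d m N => padTheta d m N p.1 t i := by
  unfold padTheta
  by_cases h : t < N ∧ i < N
  · simp only [dif_pos h]
    exact ((continuous_apply _).comp ((continuous_apply _).comp continuous_fst))
  · simp only [dif_neg h]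
    exact continuous_const

lemma continuous_padEta (t : ℕ) :
    Continuous fun p : Pspace d m N => padEta m N p.2 t := by
  unfold padEta
  by_cases h : t < N
  · simp only [dif_pos h]
    exact (continuous_apply _).comp continuous_snd
  · simp only [dif_neg h]
    exact continuous_const

lemma continuous_ctrl (W : Fin N → (Fin d → ℝ) × (Fin m → ℝ)) (t : ℕ) :
    Continuous fun p : Pspace d m N => ctrl d m N B W p t := by
  unfold ctrl
  refine Continuous.add ?_ (continuous_padEta t)
  refine continuous_finset_sum _ fun i _ => ?_
  exact (continuous_padTheta t i).matrix_mulVec continuous_const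

lemma continuous_state (xbar : Fin d → ℝ) (W : Fin N → (Fin d → ℝ) × (Fin m → ℝ)) (t : ℕ) :
    Continuous fun p : Pspace d m N => state d m N A B xbar W p t := by
  induction t with
  | zero => exact continuous_const
  | succ t ih =>
      show Continuous fun p : Pspace d m N =>
        A *ᵥ state d m N A B xbar W p t + B *ᵥ ctrl d m N B W p t
          + B *ᵥ (padW d m N W t).2 + (padW d m N W t).1
      exact (((continuous_const.matrix_mulVec ih).add
        (continuous_const.matrix_mulVec (continuous_ctrl W t))).add
        continuous_const).add continuous_const

lemma continuous_costJ {c : (Fin d → ℝ) → (Fin m → ℝ) → ℝ} {cF : (Fin d → ℝ) → ℝ}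
    (hccont : Continuous fun pr : (Fin d → ℝ) × (Fin m → ℝ) => c pr.1 pr.2)
    (hcFcont : Continuous cF) (xbar : Fin d → ℝ) (W : Fin N → (Fin d → ℝ) × (Fin m → ℝ)) :
    Continuous fun p : Pspace d m N => costJ d m N A B c cF xbar W p := by
  unfold costJ
  refine Continuous.add ?_ (hcFcont.comp (continuous_state xbar W N))
  refine continuous_finset_sum _ fun t _ => ?_
  exact hccont.comp ((continuous_state xbar W t).prodMk (continuous_ctrl W t))

/-- The feasible set for a single scenario at fixed slack level. -/
def Dset (d m N : ℕ) (A : Matrix (Fin d) (Fin d) ℝ) (B : Matrix (Fin d) (Fin m) ℝ)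
    (c : (Fin d → ℝ) → (Fin m → ℝ) → ℝ) (cF : (Fin d → ℝ) → ℝ)
    (Mset : Set (Fin d → ℝ)) (Uset : Set (Fin m → ℝ)) (Xf : Set (Fin d → ℝ))
    (xbar : Fin d → ℝ) (γ : ℝ) (W : Fin N → (Fin d → ℝ) × (Fin m → ℝ)) : Set (Pspace d m N) :=
  {p | SatisfiesCon d m N A B c cF Mset Uset Xf xbar p γ W}

lemma Dset_closed {c : (Fin d → ℝ) → (Fin m → ℝ) → ℝ} {cF : (Fin d → ℝ) → ℝ}
    {Mset : Set (Fin d → ℝ)} {Uset : Set (Fin m → ℝ)} {Xf : Set (Fin d → ℝ)}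
    (hccont : Continuous fun pr : (Fin d → ℝ) × (Fin m → ℝ) => c pr.1 pr.2)
    (hcFcont : Continuous cF) (hM : IsClosed Mset) (hU : IsClosed Uset) (hXf : IsClosed Xf)
    (xbar : Fin d → ℝ) (γ : ℝ) (W : Fin N → (Fin d → ℝ) × (Fin m → ℝ)) :
    IsClosed (Dset d m N A B c cF Mset Uset Xf xbar γ W) := by
  have h1 : Dset d m N A B c cF Mset Uset Xf xbar γ W =
      ({p | costJ d m N A B c cF xbar W p - γ ≤ 0}
        ∩ ((⋂ t ∈ Finset.range N, {p | state d m N A B xbar W p t ∈ Mset})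
        ∩ ((⋂ t ∈ Finset.range N, {p | ctrl d m N B W p t + (padW d m N W t).2 ∈ Uset})
        ∩ {p | state d m N A B xbar W p N ∈ Xf}))) := by
    ext p
    simp only [Dset, SatisfiesCon, Set.mem_setOf_eq, Set.mem_inter_iff, Set.mem_iInter,
      Finset.mem_range]
  rw [h1]
  refine IsClosed.inter ?_ (IsClosed.inter ?_ (IsClosed.inter ?_ ?_))
  · exact isClosed_le (((continuous_costJ hccont hcFcont xbar W).sub continuous_const))
      continuous_const
  · exact isClosed_biInter fun t _ => hM.preimage (continuous_state xbar W t)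
  · exact isClosed_biInter fun t _ =>
      hU.preimage ((continuous_ctrl W t).add continuous_const)
  · exact hXf.preimage (continuous_state xbar W N)

lemma Dset_convex {c : (Fin d → ℝ) → (Fin m → ℝ) → ℝ} {cF : (Fin d → ℝ) → ℝ}
    {Mset : Set (Fin d → ℝ)} {Uset : Set (Fin m → ℝ)} {Xf : Set (Fin d → ℝ)}
    (hcconv : ConvexOn ℝ Set.univ fun pr : (Fin d → ℝ) × (Fin m → ℝ) => c pr.1 pr.2)
    (hcFconv : ConvexOn ℝ Set.univ cF)
    (hMconv : Convex ℝ Mset) (hUconv : Convex ℝ Uset) (hXfconv : Convex ℝ Xf)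
    (xbar : Fin d → ℝ) (γ : ℝ) (W : Fin N → (Fin d → ℝ) × (Fin m → ℝ)) :
    Convex ℝ (Dset d m N A B c cF Mset Uset Xf xbar γ W) := by
  intro p hp q hq a b ha hb hab
  obtain ⟨hp1, hp2, hp3, hp4⟩ := hp
  obtain ⟨hq1, hq2, hq3, hq4⟩ := hq
  have hst : ∀ t, state d m N A B xbar W (a • p + b • q) t
      = a • state d m N A B xbar W p t + b • state d m N A B xbar W q t :=
    state_comb hab xbar W p q
  have hct : ∀ t, ctrl d m N B W (a • p + b • q) t
      = a • ctrl d m N B W p t + b • ctrl d m N B W q t := ctrl_comb a b W p q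
  refine ⟨?_, ?_, ?_, ?_⟩
  · have hcost : costJ d m N A B c cF xbar W (a • p + b • q)
        ≤ a * costJ d m N A B c cF xbar W p + b * costJ d m N A B c cF xbar W q := by
      unfold costJ
      have hterm : ∀ t ∈ Finset.range N,
          c (state d m N A B xbar W (a • p + b • q) t) (ctrl d m N B W (a • p + b • q) t)
            ≤ a * c (state d m N A B xbar W p t) (ctrl d m N B W p t)
              + b * c (state d m N A B xbar W q t) (ctrl d m N B W q t) := by
        intro t _
        have := hcconv.2 (Set.mem_univ (state d m N A B xbar W p t, ctrl d m N B W p t))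
          (Set.mem_univ (state d m N A B xbar W q t, ctrl d m N B W q t)) ha hb hab
        simp only [smul_eq_mul] at this
        rw [hst t, hct t]
        exact this
      have hF := hcFconv.2 (Set.mem_univ (state d m N A B xbar W p N))
        (Set.mem_univ (state d m N A B xbar W q N)) ha hb hab
      simp only [smul_eq_mul] at hF
      rw [hst N]
      calc (∑ t ∈ Finset.range N,
            c (state d m N A B xbar W (a • p + b • q) t) (ctrl d m N B W (a • p + b • q) t))
            + cF (a • state d m N A B xbar W p N + b • state d m N A B xbar W q N)
          ≤ (∑ t ∈ Finset.range N,
              (a * c (state d m N A B xbar W p t) (ctrl d m N B W p t)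
                + b * c (state d m N A B xbar W q t) (ctrl d m N B W q t)))
            + (a * cF (state d m N A B xbar W p N) + b * cF (state d m N A B xbar W q N)) :=
            add_le_add (Finset.sum_le_sum hterm) hF
        _ = a * ((∑ t ∈ Finset.range N,
              c (state d m N A B xbar W p t) (ctrl d m N B W p t))
                + cF (state d m N A B xbar W p N))
            + b * ((∑ t ∈ Finset.range N,
              c (state d m N A B xbar W q t) (ctrl d m N B W q t))
                + cF (state d m N A B xbar W q N)) := by
            rw [Finset.sum_add_distrib, ← Finset.mul_sum, ← Finset.mul_sum]; ring
    have := add_le_add (mul_le_mul_of_nonneg_left (by linarith [hp1] : costJ d m N A B c cF xbar W p ≤ γ) ha)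
      (mul_le_mul_of_nonneg_left (by linarith [hq1] : costJ d m N A B c cF xbar W q ≤ γ) hb)
    have hγ : a * γ + b * γ = γ := by rw [← add_mul, hab, one_mul]
    linarith
  · intro t ht
    rw [hst t]
    exact hMconv (hp2 t ht) (hq2 t ht) ha hb hab
  · intro t ht
    rw [hct t]
    have : a • ctrl d m N B W p t + b • ctrl d m N B W q t + (padW d m N W t).2
        = a • (ctrl d m N B W p t + (padW d m N W t).2)
          + b • (ctrl d m N B W q t + (padW d m N W t).2) := by
      simp only [smul_add]
      conv_lhs => rw [show (padW d m N W t).2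
        = a • (padW d m N W t).2 + b • (padW d m N W t).2 by rw [← add_smul, hab, one_smul]]
      abel
    rw [this]
    exact hUconv (hp3 t ht) (hq3 t ht) ha hb hab
  · rw [hst N]
    exact hXfconv hp4 hq4 ha hb hab

end AuxLemmas3
section AuxLemmas4

open Module

lemma finrank_Pspace (d m N : ℕ) :
    Module.finrank ℝ (Pspace d m N) + 1 ≤ nDim d m N := by
  have h1 : Module.finrank ℝ (Pspace d m N)
      = Module.finrank ℝ (Fin N → Fin N → Matrix (Fin m) (Fin d) ℝ)
        + Module.finrank ℝ (Fin N → Fin m → ℝ) := Module.finrank_prod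
  have h2 : Module.finrank ℝ (Fin N → Fin N → Matrix (Fin m) (Fin d) ℝ)
      = N * (N * (m * d)) := by
    rw [Module.finrank_pi_fintype, Finset.sum_const, Finset.card_univ, Fintype.card_fin,
      smul_eq_mul]
    congr 1
    rw [Module.finrank_pi_fintype, Finset.sum_const, Finset.card_univ, Fintype.card_fin,
      smul_eq_mul]
    congr 1
    rw [Module.finrank_matrix, Fintype.card_fin, Fintype.card_fin, Module.finrank_self,
      mul_one]
  have h3 : Module.finrank ℝ (Fin N → Fin m → ℝ) = N * m := by
    rw [Module.finrank_pi_fintype, Finset.sum_const, Finset.card_univ, Fintype.card_fin,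
      smul_eq_mul, Module.finrank_pi, Fintype.card_fin]
  rw [h1, h2, h3]
  unfold nDim
  nlinarith [sq_nonneg N]

/-- In an Artinian module, an infimum of a family of submodules is achieved by
a finite subfamily. -/
lemma iInf_eq_finset_iInf {R M ι : Type*} [Ring R] [AddCommGroup M] [Module R M]
    [IsArtinian R M] [Nonempty ι] (f : ι → Submodule R M) :
    ∃ s : Finset ι, (⨅ i ∈ s, f i) = ⨅ i, f i := by
  classical
  obtain ⟨M', ⟨s₀, hs₀⟩, hmin⟩ := IsArtinian.set_has_minimal
    {M' : Submodule R M | ∃ s : Finset ι, M' = ⨅ i ∈ s, f i} ⟨⊤, ∅, by simp⟩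
  refine ⟨s₀, ?_⟩
  rw [← hs₀]
  refine le_antisymm (le_iInf fun i => ?_) ?_
  · by_contra hle
    have hlt : M' ⊓ f i < M' := lt_of_le_of_ne inf_le_left (fun h => hle (h ▸ inf_le_right))
    exact hmin (M' ⊓ f i) ⟨insert i s₀, by
      rw [Finset.iInf_insert, hs₀, inf_comm]⟩ hlt
  · rw [hs₀]
    exact le_iInf₂ fun i _ => iInf_le f i
  
end AuxLemmas4
section AuxLemmas5
set_option synthInstance.maxHeartbeats 1000000
set_option maxHeartbeats 1000000

open LinearMap Submodule

lemma exists_finset_empty_inter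
    {d m N : ℕ} {A : Matrix (Fin d) (Fin d) ℝ} {B : Matrix (Fin d) (Fin m) ℝ}
    {c : (Fin d → ℝ) → (Fin m → ℝ) → ℝ} {cF : (Fin d → ℝ) → ℝ}
    {Mset : Set (Fin d → ℝ)} {Uset : Set (Fin m → ℝ)} {Xf : Set (Fin d → ℝ)}
    {Wset : Set (Fin d → ℝ)} {Vset : Set (Fin m → ℝ)} {xbar : Fin d → ℝ} {γ' : ℝ}
    (hccont : Continuous fun pr : (Fin d → ℝ) × (Fin m → ℝ) => c pr.1 pr.2)
    (hcFcont : Continuous cF)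
    (hMcl : IsClosed Mset) (hU : IsCompact Uset) (hXf : IsClosed Xf)
    (hAdm : (Adm d m N Wset Vset).Nonempty)
    (hempty : (⋂ W : ↥(Adm d m N Wset Vset),
      Dset d m N A B c cF Mset Uset Xf xbar γ' W.val) = ∅) :
    ∃ F : Finset ↥(Adm d m N Wset Vset),
      (⋂ i ∈ F, Dset d m N A B c cF Mset Uset Xf xbar γ' i.val) = ∅ := by
  classical
  haveI : Nonempty ↥(Adm d m N Wset Vset) := hAdm.to_subtype
  set ι := ↥(Adm d m N Wset Vset)
  -- the ineffective subspace
  set V : Submodule ℝ (Pspace d m N) :=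
    ⨅ i : ι, LinearMap.ker (ctrlL d m N B i.val) with hV
  obtain ⟨s₀, hs₀⟩ := iInf_eq_finset_iInf (fun i : ι => LinearMap.ker (ctrlL d m N B i.val))
  obtain ⟨V', hVc⟩ := Submodule.exists_isCompl V
  -- the injective linear map
  set Ψ : Pspace d m N →ₗ[ℝ] (↥s₀ → Fin N → Fin m → ℝ) :=
    LinearMap.pi (fun i : ↥s₀ => ctrlL d m N B (i : ι).val) with hΨ
  set Θ : Pspace d m N →ₗ[ℝ] (↥s₀ → Fin N → Fin m → ℝ) × V :=
    Ψ.prod (Submodule.projectionOnto (p := V) (q := V') hVc) with hΘ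
  have hkerΨ : LinearMap.ker Ψ = V := by
    rw [hΨ, LinearMap.ker_pi, hV, ← hs₀, iInf_subtype]
  have hker : LinearMap.ker Θ = ⊥ := by
    rw [hΘ, LinearMap.ker_prod, hkerΨ, Submodule.ker_projectionOnto,
      hVc.disjoint.eq_bot]
  have hce := LinearMap.isClosedEmbedding_of_injective hker
  -- the compact target set
  set Cs : Set ((↥s₀ → Fin N → Fin m → ℝ) × V) :=
    (Set.univ.pi fun i : ↥s₀ => Set.univ.pi fun t : Fin N =>
      {u : Fin m → ℝ | u + (padW d m N (i : ι).val t).2 ∈ Uset}) ×ˢ {0} with hCs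
  have hCscomp : IsCompact Cs := by
    refine IsCompact.prod (isCompact_univ_pi fun i => isCompact_univ_pi fun t => ?_)
      isCompact_singleton
    have : {u : Fin m → ℝ | u + (padW d m N (i : ι).val t).2 ∈ Uset}
        = (fun x => x - (padW d m N (i : ι).val t).2) '' Uset := by
      ext u
      constructor
      · intro hu
        exact ⟨u + (padW d m N (i : ι).val t).2, hu, add_sub_cancel_right _ _⟩
      · rintro ⟨x, hx, rfl⟩
        simpa [sub_add_cancel] using hx
    rw [this]
    exact hU.image (continuous_id.sub continuous_const)
  -- the compact base set
  set K : Set (Pspace d m N) :=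
    (⋂ i ∈ s₀, Dset d m N A B c cF Mset Uset Xf xbar γ' (i : ι).val) ∩ (V' : Set (Pspace d m N))
    with hK
  have hKsub : K ⊆ Θ ⁻¹' Cs := by
    rintro p ⟨hpD, hpV'⟩
    rw [Set.mem_preimage, hCs, Set.mem_prod]
    constructor
    · rw [Set.mem_univ_pi]
      intro i
      rw [Set.mem_univ_pi]
      intro t
      have hsat := Set.mem_iInter₂.1 hpD i i.2
      exact hsat.2.2.1 t t.isLt
    · have : Submodule.projectionOnto (p := V) (q := V') hVc p = 0 := by
        rw [← LinearMap.mem_ker, Submodule.ker_projectionOnto]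
        exact hpV'
      simp [hΘ, this]
  have hKclosed : IsClosed K := by
    refine IsClosed.inter (isClosed_biInter fun i _ => ?_)
      (Submodule.closed_of_finiteDimensional V')
    exact Dset_closed hccont hcFcont hMcl hU.isClosed hXf xbar γ' (i : ι).val
  have hKcomp : IsCompact K :=
    (hce.isCompact_preimage hCscomp).of_isClosed_subset hKclosed hKsub
  have hdisj : K ∩ ⋂ i : ι, Dset d m N A B c cF Mset Uset Xf xbar γ' i.val = ∅ := by
    rw [hempty, Set.inter_empty]
  obtain ⟨u, hu⟩ := hKcomp.elim_finite_subfamily_closed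
    (fun i : ι => Dset d m N A B c cF Mset Uset Xf xbar γ' i.val)
    (fun i => Dset_closed hccont hcFcont hMcl hU.isClosed hXf xbar γ' i.val) hdisj
  refine ⟨s₀ ∪ u, ?_⟩
  by_contra hne
  obtain ⟨p, hp⟩ := Set.nonempty_iff_ne_empty.2 hne
  have hpmem : p ∈ (V ⊔ V' : Submodule ℝ (Pspace d m N)) := by
    rw [hVc.sup_eq_top]; trivial
  obtain ⟨y, hy, z, hz, hyz⟩ := Submodule.mem_sup.1 hpmem
  -- `z` satisfies the same constraints as `p`
  have hctrl : ∀ i : ι, ∀ t : ℕ, ctrl d m N B i.val p t = ctrl d m N B i.val z t := by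
    intro i t
    have hy0 : ∀ t : ℕ, ctrl d m N B i.val y t = 0 := by
      intro t
      by_cases ht : t < N
      · have hVle : V ≤ LinearMap.ker (ctrlL d m N B i.val) := by
          rw [hV]; exact iInf_le _ i
        have hyk : y ∈ LinearMap.ker (ctrlL d m N B i.val) := hVle hy
        rw [LinearMap.mem_ker] at hyk
        have := congrFun hyk ⟨t, ht⟩
        simpa [ctrlL] using this
      · exact ctrl_of_ge i.val y (le_of_not_gt ht)
    rw [← hyz, ctrl_add, hy0 t, add_comm, add_zero]
  have hzD : ∀ i : ι, p ∈ Dset d m N A B c cF Mset Uset Xf xbar γ' i.val →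
      z ∈ Dset d m N A B c cF Mset Uset Xf xbar γ' i.val := by
    intro i hpi
    exact satisfiesCon_congr (hctrl i) hpi
  have hzK : z ∈ K := by
    refine ⟨Set.mem_iInter₂.2 fun i hi => hzD i ?_, hz⟩
    exact Set.mem_iInter₂.1 hp i (Finset.mem_union_left u hi)
  have hzu : z ∈ ⋂ i ∈ u, Dset d m N A B c cF Mset Uset Xf xbar γ' i.val := by
    refine Set.mem_iInter₂.2 fun i hi => hzD i ?_
    exact Set.mem_iInter₂.1 hp i (Finset.mem_union_right s₀ hi)
  have : z ∈ K ∩ ⋂ i ∈ u, Dset d m N A B c cF Mset Uset Xf xbar γ' i.val := ⟨hzK, hzu⟩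
  rw [hu] at this
  exact this

end AuxLemmas5

/-- **Exactness of the MSA reduction for the approximation-aware robust MPC problem.**
Under the Slater-type assumption at `x̄`, if `𝒲*` maximizes `𝒲 ↦ G(𝒲; x̄)` over the
admissible tuples `((𝕎×𝕍)^N)^n`, then `G(𝒲*; x̄)` equals the value `J*_N(x̄)` of the
semi-infinite program. -/
theorem Gval_max_eq_SIP_value (d m N : ℕ) (hd : 1 ≤ d) (hm : 1 ≤ m) (hN : 1 ≤ N)
    (A : Matrix (Fin d) (Fin d) ℝ) (B : Matrix (Fin d) (Fin m) ℝ)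
    (Mset : Set (Fin d → ℝ)) (Uset : Set (Fin m → ℝ))
    (Wset : Set (Fin d → ℝ)) (Vset : Set (Fin m → ℝ)) (Xf : Set (Fin d → ℝ))
    (hM : IsCompact Mset) (hMconv : Convex ℝ Mset) (hM0 : (0 : Fin d → ℝ) ∈ interior Mset)
    (hU : IsCompact Uset) (hUconv : Convex ℝ Uset) (hU0 : (0 : Fin m → ℝ) ∈ interior Uset)
    (hW : IsCompact Wset) (hWconv : Convex ℝ Wset)
    (hV : IsCompact Vset) (hVconv : Convex ℝ Vset)
    (hXf : IsClosed Xf) (hXfconv : Convex ℝ Xf) (hXfsub : Xf ⊆ Mset)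
    (hXf0 : (0 : Fin d → ℝ) ∈ interior Xf)
    (c : (Fin d → ℝ) → (Fin m → ℝ) → ℝ) (cF : (Fin d → ℝ) → ℝ)
    (hccont : Continuous fun pr : (Fin d → ℝ) × (Fin m → ℝ) => c pr.1 pr.2)
    (hcconv : ConvexOn ℝ Set.univ fun pr : (Fin d → ℝ) × (Fin m → ℝ) => c pr.1 pr.2)
    (hcFcont : Continuous cF) (hcFconv : ConvexOn ℝ Set.univ cF)
    (xbar : Fin d → ℝ)
    (hSlater : SlaterCondition d m N A B c cF Mset Uset Xf Wset Vset xbar)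
    (Wstar : Fin (nDim d m N) → Fin N → (Fin d → ℝ) × (Fin m → ℝ))
    (hWstarAdm : ∀ i, Wstar i ∈ Adm d m N Wset Vset)
    (hWstarMax : ∀ Ws : Fin (nDim d m N) → Fin N → (Fin d → ℝ) × (Fin m → ℝ),
      (∀ i, Ws i ∈ Adm d m N Wset Vset) →
      Gval d m N A B c cF Mset Uset Xf xbar Ws ≤
        Gval d m N A B c cF Mset Uset Xf xbar Wstar)
    (Jstar : ℝ)
    (hJstar : Jstar = sInf {r : ℝ | 0 ≤ r ∧
      ∃ p : (Fin N → Fin N → Matrix (Fin m) (Fin d) ℝ) × (Fin N → Fin m → ℝ),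
        ∀ W ∈ Adm d m N Wset Vset,
          SatisfiesCon d m N A B c cF Mset Uset Xf xbar p r W}) :
    Gval d m N A B c cF Mset Uset Xf xbar Wstar = Jstar := by
  classical
  -- the value sets
  set SG : (Fin (nDim d m N) → Fin N → (Fin d → ℝ) × (Fin m → ℝ)) → Set ℝ :=
    fun Ws => {r : ℝ | 0 ≤ r ∧ ∃ p : Pspace d m N,
      ∀ i, SatisfiesCon d m N A B c cF Mset Uset Xf xbar p r (Ws i)} with hSG
  have hGval : ∀ Ws, Gval d m N A B c cF Mset Uset Xf xbar Ws = sInf (SG Ws) := fun _ => rfl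
  set SIP : Set ℝ := {r : ℝ | 0 ≤ r ∧ ∃ p : Pspace d m N,
    ∀ W ∈ Adm d m N Wset Vset,
      SatisfiesCon d m N A B c cF Mset Uset Xf xbar p r W} with hSIPdef
  have hJstar' : Jstar = sInf SIP := hJstar
  -- Slater gives a universally feasible point
  obtain ⟨O, hOopen, hOne, hOsub, p₀, r₀, hS⟩ := hSlater
  set r₁ := max r₀ 0 with hr₁
  have hr₁0 : 0 ≤ r₁ := le_max_right r₀ 0
  have hfeas : ∀ W ∈ Adm d m N Wset Vset,
      SatisfiesCon d m N A B c cF Mset Uset Xf xbar p₀ r₁ W := by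
    intro W hW
    obtain ⟨h1, h2, h3⟩ := hS W hW
    refine ⟨?_, ?_, ?_, interior_subset h3⟩
    · have := le_max_left r₀ 0
      linarith
    · intro t ht
      exact interior_subset (hOsub (h2 t ht)).1
    · intro t ht
      exact interior_subset (hOsub (h2 t ht)).2
  -- nonemptiness and lower bounds of the value sets
  have hSGne : ∀ Ws, (∀ i, Ws i ∈ Adm d m N Wset Vset) → (SG Ws).Nonempty := by
    intro Ws h
    exact ⟨r₁, hr₁0, p₀, fun i => hfeas _ (h i)⟩
  have hSGbdd : ∀ Ws, BddBelow (SG Ws) := fun Ws => ⟨0, fun r hr => hr.1⟩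
  have hSIPne : SIP.Nonempty := ⟨r₁, hr₁0, p₀, hfeas⟩
  have hSIPbdd : BddBelow SIP := ⟨0, fun r hr => hr.1⟩
  -- the easy inequality
  have heasy : Gval d m N A B c cF Mset Uset Xf xbar Wstar ≤ Jstar := by
    rw [hGval, hJstar']
    refine csInf_le_csInf (hSGbdd Wstar) hSIPne ?_
    rintro r ⟨hr0, p, hp⟩
    exact ⟨hr0, p, fun i => hp _ (hWstarAdm i)⟩
  have hγ0 : 0 ≤ Gval d m N A B c cF Mset Uset Xf xbar Wstar := by
    rw [hGval]
    exact le_csInf (hSGne Wstar hWstarAdm) fun r hr => hr.1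
  -- suppose for contradiction that the value is strictly smaller
  by_contra hne
  have hlt : Gval d m N A B c cF Mset Uset Xf xbar Wstar < Jstar :=
    lt_of_le_of_ne heasy hne
  set γ := Gval d m N A B c cF Mset Uset Xf xbar Wstar with hγdef
  set γ' := (γ + Jstar) / 2 with hγ'def
  have hγ'1 : γ < γ' := by rw [hγ'def]; linarith
  have hγ'2 : γ' < Jstar := by rw [hγ'def]; linarith
  have hγ'0 : 0 ≤ γ' := le_trans hγ0 (le_of_lt hγ'1)
  -- no decision is feasible for all scenarios at level γ'
  have hempty : (⋂ W : ↥(Adm d m N Wset Vset),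
      Dset d m N A B c cF Mset Uset Xf xbar γ' W.val) = ∅ := by
    by_contra hno
    obtain ⟨p, hp⟩ := Set.nonempty_iff_ne_empty.2 hno
    have hmem : γ' ∈ SIP := by
      refine ⟨hγ'0, p, fun W hW => ?_⟩
      exact Set.mem_iInter.1 hp ⟨W, hW⟩
    have : Jstar ≤ γ' := hJstar' ▸ csInf_le hSIPbdd hmem
    linarith
  have hnDimpos : 0 < nDim d m N := by unfold nDim; omega
  have hAdmne : (Adm d m N Wset Vset).Nonempty :=
    ⟨Wstar ⟨0, hnDimpos⟩, hWstarAdm _⟩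
  -- reduce to a finite subfamily
  obtain ⟨F, hF⟩ := exists_finset_empty_inter hccont hcFcont hM.isClosed hU hXf hAdmne hempty
  -- Helly's theorem: at most `finrank + 1 ≤ nDim` scenarios suffice
  have hex : ∃ I : Finset ↥(Adm d m N Wset Vset), I ⊆ F ∧
      I.card ≤ Module.finrank ℝ (Pspace d m N) + 1 ∧
      (⋂ i ∈ I, Dset d m N A B c cF Mset Uset Xf xbar γ' i.val) = ∅ := by
    by_contra hno
    push_neg at hno
    have hHelly := Convex.helly_theorem' (𝕜 := ℝ)
      (F := fun i : ↥(Adm d m N Wset Vset) => Dset d m N A B c cF Mset Uset Xf xbar γ' i.val)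
      (s := F)
      (fun i _ => Dset_convex hcconv hcFconv hMconv hUconv hXfconv xbar γ' i.val)
      (fun I hIF hIc => hno I hIF hIc)
    rw [hF] at hHelly
    exact Set.not_nonempty_empty hHelly
  obtain ⟨I, hIF, hIcard, hIempty⟩ := hex
  -- enumerate the scenarios of `I` into a tuple of length `nDim`
  set l := I.toList with hl
  have hlen : l.length ≤ nDim d m N := by
    rw [hl, Finset.length_toList]
    exact hIcard.trans (finrank_Pspace d m N)
  set Ws : Fin (nDim d m N) → Fin N → (Fin d → ℝ) × (Fin m → ℝ) :=
    fun k => if h : (k : ℕ) < l.length then (l.get ⟨k, h⟩).val else Wstar k with hWs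
  have hWsAdm : ∀ k, Ws k ∈ Adm d m N Wset Vset := by
    intro k
    simp only [hWs]
    by_cases h : (k : ℕ) < l.length
    · rw [dif_pos h]; exact (l.get ⟨k, h⟩).2
    · rw [dif_neg h]; exact hWstarAdm k
  have hcover : ∀ i ∈ I, ∃ k : Fin (nDim d m N), Ws k = (i : ↥(Adm d m N Wset Vset)).val := by
    intro i hi
    have hmem : i ∈ l := by rw [hl]; exact Finset.mem_toList.2 hi
    obtain ⟨j, hj⟩ := List.mem_iff_get.1 hmem
    refine ⟨⟨j, lt_of_lt_of_le j.2 hlen⟩, ?_⟩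
    simp only [hWs]
    have hlt : ((⟨(j : ℕ), lt_of_lt_of_le j.2 hlen⟩ : Fin (nDim d m N)) : ℕ) < l.length := j.2
    rw [dif_pos hlt]
    have hidx : (⟨((⟨(j : ℕ), lt_of_lt_of_le j.2 hlen⟩ : Fin (nDim d m N)) : ℕ), hlt⟩ :
        Fin l.length) = j := Fin.ext rfl
    rw [hidx, hj]
  -- the tuple `Ws` forces value at least `γ'`
  have hlb : γ' ≤ Gval d m N A B c cF Mset Uset Xf xbar Ws := by
    rw [hGval]
    refine le_csInf (hSGne Ws hWsAdm) ?_
    rintro r ⟨hr0, p, hp⟩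
    by_contra hrlt
    push_neg at hrlt
    have hpI : p ∈ ⋂ i ∈ I, Dset d m N A B c cF Mset Uset Xf xbar γ' i.val := by
      refine Set.mem_iInter₂.2 fun i hi => ?_
      obtain ⟨k, hk⟩ := hcover i hi
      have := satisfiesCon_mono (le_of_lt hrlt) (hp k)
      rw [hk] at this
      exact this
    rw [hIempty] at hpI
    exact hpI
  have := hWstarMax Ws hWsAdm
  linarith
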